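/- Let m be a closed and coherent DBM of dimension 2n, let a,b ∈ {0,…,2n−1}, let d ∈ ℚ, and let m' = IncClose(m,a,b,d), m'' = Strengthen(m') and m''' = IncClose(m'',a,b,d). Then either m' is consistent and m''' = m'', or m''' is not consistent. -/
import Mathlib


namespace Octagon

/-- A DBM of dimension `2*n` with entries in `ℚ ∪ {+∞}`. -/
abbrev DBM (n : ℕ) : Type := Fin (2 * n) → Fin (2 * n) → WithTop ℚ

/-- `bar i = i + 1` if `i` is even, `i - 1` if `i` is odd. -/
def bar {n : ℕ} (i : Fin (2 * n)) : Fin (2 * n) :=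
  if h : (i : ℕ) % 2 = 0 then ⟨(i : ℕ) + 1, by have := i.isLt; omega⟩
  else ⟨(i : ℕ) - 1, by have := i.isLt; omega⟩

/-- A DBM is closed iff its diagonal is zero and it satisfies the triangle inequality. -/
def Closed {n : ℕ} (m : DBM n) : Prop :=
  (∀ i, m i i = 0) ∧ ∀ i j k, m i j ≤ m i k + m k j

/-- A DBM is consistent iff its diagonal entries are nonnegative. -/
def Consistent {n : ℕ} (m : DBM n) : Prop :=
  ∀ i, 0 ≤ m i i

/-- A DBM is coherent iff `m[i,j] = m[bar j, bar i]` for all `i, j`. -/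
def Coherent {n : ℕ} (m : DBM n) : Prop :=
  ∀ i j, m i j = m (bar j) (bar i)

/-- Incremental closure of `m` with the new constraint `x'_a - x'_b ≤ d`. -/
def IncClose {n : ℕ} (m : DBM n) (a b : Fin (2 * n)) (d : ℚ) : DBM n :=
  fun i j =>
    min (m i j) <|
    min (m i a + (d : WithTop ℚ) + m b j) <|
    min (m i (bar b) + (d : WithTop ℚ) + m (bar a) j) <|
    min (m i (bar b) + (d : WithTop ℚ) + m (bar a) a + (d : WithTop ℚ) + m b j)
        (m i a + (d : WithTop ℚ) + m b (bar b) + (d : WithTop ℚ) + m (bar a) j)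

/-- Halving on `ℚ ∪ {+∞}`, mapping `+∞` to `+∞`. -/
def halve : WithTop ℚ → WithTop ℚ := WithTop.map (fun x => x / 2)

/-- Strengthening of a DBM. -/
def Strengthen {n : ℕ} (m : DBM n) : DBM n :=
  fun i j => min (m i j) (halve (m i (bar i) + m (bar j) j))

theorem bar_val {n : ℕ} (i : Fin (2 * n)) :
    (bar i : ℕ) = if (i : ℕ) % 2 = 0 then (i : ℕ) + 1 else (i : ℕ) - 1 := by
  unfold bar; split_ifs with h <;> rfl

theorem bar_bar {n : ℕ} (i : Fin (2 * n)) : bar (bar i) = i := by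
  apply Fin.ext; rw [bar_val, bar_val]; have := i.isLt; split_ifs <;> omega

theorem halve_mono {x y : WithTop ℚ} (h : x ≤ y) : halve x ≤ halve y := by
  cases x with
  | top => cases y with
    | top => exact le_refl _
    | coe q => simp at h
  | coe p => cases y with
    | top => simp [halve]
    | coe q => simp [halve] at h ⊢; linarith

theorem halve_add_self (x z : WithTop ℚ) : halve (x + x + z) = x + halve z := by
  cases x with
  | top => simp [halve]
  | coe p => cases z with
    | top => simp [halve, ← WithTop.coe_add]
    | coe q => simp only [halve, ← WithTop.coe_add, WithTop.map_coe]
               norm_cast; ring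

theorem halve_add (x y : WithTop ℚ) : halve (x + y) = halve x + halve y := by
  cases x with
  | top => simp [halve]
  | coe p => cases y with
    | top => simp [halve, ← WithTop.coe_add]
    | coe q => simp only [halve, ← WithTop.coe_add, WithTop.map_coe]
               norm_cast; ring

theorem halve_nonneg {x : WithTop ℚ} (h : 0 ≤ x) : 0 ≤ halve x := by
  have h0 : halve 0 = 0 := by simp [halve]
  calc (0 : WithTop ℚ) = halve 0 := h0.symm
    _ ≤ halve x := halve_mono h


section AuxStrengthen
variable {n : ℕ}

theorem strengthen_def (A : DBM n) (i j : Fin (2 * n)) :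
    Strengthen A i j = min (A i j) (halve (A i (bar i) + A (bar j) j)) := rfl

theorem strengthen_le (A : DBM n) (i j : Fin (2 * n)) : Strengthen A i j ≤ A i j :=
  min_le_left _ _

theorem strengthen_le' (A : DBM n) (i j : Fin (2 * n)) :
    Strengthen A i j ≤ halve (A i (bar i) + A (bar j) j) := min_le_right _ _

theorem strengthen_closed (A : DBM n) (hcl : Closed A) (hcoh : Coherent A) :
    Closed (Strengthen A) := by
  have hd0 := hcl.1
  have htri := hcl.2
  constructor
  · intro i
    rw [strengthen_def]
    rw [min_eq_left]
    · exact hd0 i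
    · rw [hd0 i]
      apply halve_nonneg
      calc (0 : WithTop ℚ) = A i i := (hd0 i).symm
        _ ≤ A i (bar i) + A (bar i) i := htri i i (bar i)
  · intro i j k
    rw [strengthen_def A i k, strengthen_def A k j]
    simp only [← min_add_add_right, ← min_add_add_left, le_min_iff]
    repeat' apply And.intro
    · exact le_trans (strengthen_le A i j) (htri i j k)
    · -- h(A i ī + A k̄ k) + A k j
      calc Strengthen A i j ≤ halve (A i (bar i) + A (bar j) j) := strengthen_le' A i j
        _ ≤ halve (A k j + A k j + (A i (bar i) + A (bar k) k)) := by
            apply halve_mono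
            calc A i (bar i) + A (bar j) j
                ≤ A i (bar i) + (A (bar j) (bar k) + A (bar k) j) := by
                  gcongr; exact htri (bar j) j (bar k)
              _ ≤ A i (bar i) + (A (bar j) (bar k) + (A (bar k) k + A k j)) := by
                  gcongr; exact htri (bar k) j k
              _ = A i (bar i) + (A k j + (A (bar k) k + A k j)) := by
                  rw [← hcoh k j]
              _ = A k j + A k j + (A i (bar i) + A (bar k) k) := by abel
        _ = A k j + halve (A i (bar i) + A (bar k) k) := halve_add_self _ _
        _ = halve (A i (bar i) + A (bar k) k) + A k j := by abel
    · -- A i k + h(A k k̄ + A j̄ j)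
      calc Strengthen A i j ≤ halve (A i (bar i) + A (bar j) j) := strengthen_le' A i j
        _ ≤ halve (A i k + A i k + (A k (bar k) + A (bar j) j)) := by
            apply halve_mono
            calc A i (bar i) + A (bar j) j
                ≤ (A i k + A k (bar i)) + A (bar j) j := by
                  gcongr; exact htri i (bar i) k
              _ ≤ (A i k + (A k (bar k) + A (bar k) (bar i))) + A (bar j) j := by
                  gcongr; exact htri k (bar i) (bar k)
              _ = (A i k + (A k (bar k) + A i k)) + A (bar j) j := by
                  rw [show A (bar k) (bar i) = A i k from (hcoh i k).symm]
              _ = A i k + A i k + (A k (bar k) + A (bar j) j) := by abel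
        _ = A i k + halve (A k (bar k) + A (bar j) j) := halve_add_self _ _
    · -- h + h
      calc Strengthen A i j ≤ halve (A i (bar i) + A (bar j) j) := strengthen_le' A i j
        _ ≤ halve ((A i (bar i) + A (bar k) k) + (A k (bar k) + A (bar j) j)) := by
            apply halve_mono
            have h0 : (0 : WithTop ℚ) ≤ A (bar k) k + A k (bar k) := by
              calc (0 : WithTop ℚ) = A (bar k) (bar k) := (hd0 (bar k)).symm
                _ ≤ A (bar k) k + A k (bar k) := htri (bar k) (bar k) k
            calc A i (bar i) + A (bar j) j
                ≤ A i (bar i) + A (bar j) j + (A (bar k) k + A k (bar k)) :=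
                  le_add_of_nonneg_right h0
              _ = (A i (bar i) + A (bar k) k) + (A k (bar k) + A (bar j) j) := by abel
        _ = halve (A i (bar i) + A (bar k) k) + halve (A k (bar k) + A (bar j) j) :=
            halve_add _ _

end AuxStrengthen

section AuxInc
variable {n : ℕ} (m : DBM n) (a b : Fin (2 * n)) (d : ℚ)

theorem incClose_def (i j : Fin (2 * n)) : IncClose m a b d i j =
    min (m i j) (min (m i a + (d : WithTop ℚ) + m b j)
    (min (m i (bar b) + (d : WithTop ℚ) + m (bar a) j)
    (min (m i (bar b) + (d : WithTop ℚ) + m (bar a) a + (d : WithTop ℚ) + m b j)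
        (m i a + (d : WithTop ℚ) + m b (bar b) + (d : WithTop ℚ) + m (bar a) j)))) := rfl

theorem incClose_le (i j : Fin (2 * n)) : IncClose m a b d i j ≤ m i j := min_le_left _ _
theorem incClose_le1 (i j : Fin (2 * n)) :
    IncClose m a b d i j ≤ m i a + (d : WithTop ℚ) + m b j :=
  le_trans (min_le_right _ _) (min_le_left _ _)
theorem incClose_le2 (i j : Fin (2 * n)) :
    IncClose m a b d i j ≤ m i (bar b) + (d : WithTop ℚ) + m (bar a) j :=
  le_trans (min_le_right _ _) (le_trans (min_le_right _ _) (min_le_left _ _))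
theorem incClose_le3 (i j : Fin (2 * n)) :
    IncClose m a b d i j ≤ m i (bar b) + (d : WithTop ℚ) + m (bar a) a + (d : WithTop ℚ) + m b j :=
  le_trans (min_le_right _ _) (le_trans (min_le_right _ _)
    (le_trans (min_le_right _ _) (min_le_left _ _)))
theorem incClose_le4 (i j : Fin (2 * n)) :
    IncClose m a b d i j ≤ m i a + (d : WithTop ℚ) + m b (bar b) + (d : WithTop ℚ) + m (bar a) j :=
  le_trans (min_le_right _ _) (le_trans (min_le_right _ _)
    (le_trans (min_le_right _ _) (min_le_right _ _)))

theorem incClose_closed (hcl : Closed m) (hcoh : Coherent m)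
    (hcons : Consistent (IncClose m a b d)) : Closed (IncClose m a b d) := by
  have hd0 := hcl.1
  have htri := hcl.2
  set D : WithTop ℚ := (d : WithTop ℚ) with hD
  -- consistency facts
  have C1 : (0 : WithTop ℚ) ≤ D + m b a := by
    have h := le_trans (hcons a) (incClose_le1 m a b d a a)
    rwa [hd0 a, zero_add] at h
  have C1' : (0 : WithTop ℚ) ≤ D + m (bar a) (bar b) := by rw [← hcoh b a]; exact C1
  have C3 : (0 : WithTop ℚ) ≤ m b (bar b) + D + m (bar a) a + D := by
    have h := le_trans (hcons b) (incClose_le3 m a b d b b)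
    calc (0 : WithTop ℚ) ≤ m b (bar b) + D + m (bar a) a + D + m b b := h
      _ = m b (bar b) + D + m (bar a) a + D := by rw [hd0 b, add_zero]
  constructor
  · intro i
    refine le_antisymm ?_ (hcons i)
    calc IncClose m a b d i i ≤ m i i := incClose_le m a b d i i
      _ = 0 := hd0 i
  · intro i j k
    have drop1 : ∀ t N R : WithTop ℚ, 0 ≤ N → t + N = R → t ≤ R := by
      intro t N R h he; rw [← he]; exact le_add_of_nonneg_right h
    have drop2 : ∀ t N1 N2 R : WithTop ℚ, 0 ≤ N1 → 0 ≤ N2 → t + N1 + N2 = R → t ≤ R := by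
      intro t N1 N2 R h1 h2 he; rw [← he]
      calc t ≤ t + N1 := le_add_of_nonneg_right h1
        _ ≤ t + N1 + N2 := le_add_of_nonneg_right h2
    -- the five upper bounds on IncClose i j, with flexible association
    have T0 : IncClose m a b d i j ≤ m i j := incClose_le m a b d i j
    have T1 : IncClose m a b d i j ≤ m i a + D + m b j := incClose_le1 m a b d i j
    have T2 : IncClose m a b d i j ≤ m i (bar b) + D + m (bar a) j := incClose_le2 m a b d i j
    have T3 : IncClose m a b d i j ≤ m i (bar b) + (D + m (bar a) a + D) + m b j :=
      le_trans (incClose_le3 m a b d i j) (le_of_eq (by abel))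
    have T4 : IncClose m a b d i j ≤ m i a + (D + m b (bar b) + D) + m (bar a) j :=
      le_trans (incClose_le4 m a b d i j) (le_of_eq (by abel))
    -- generic composition steps
    have main : ∀ (u1 v1 u2 v2 : Fin (2 * n)) (w1 w2 w3 X : WithTop ℚ),
        w3 ≤ w1 + m v1 u2 + w2 →
        IncClose m a b d i j ≤ m i u1 + w3 + m v2 j →
        m i u1 + w1 + m v1 k + (m k u2 + w2 + m v2 j) = X →
        IncClose m a b d i j ≤ X := by
      intro u1 v1 u2 v2 w1 w2 w3 X hw h he
      calc IncClose m a b d i j ≤ m i u1 + w3 + m v2 j := h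
        _ ≤ m i u1 + (w1 + m v1 u2 + w2) + m v2 j := by gcongr
        _ ≤ m i u1 + (w1 + (m v1 k + m k u2) + w2) + m v2 j := by
            gcongr; exact htri v1 u2 k
        _ = X := by rw [← he]; abel
    have mainL : ∀ (u v : Fin (2 * n)) (w X : WithTop ℚ),
        IncClose m a b d i j ≤ m i u + w + m v j →
        m i k + (m k u + w + m v j) = X → IncClose m a b d i j ≤ X := by
      intro u v w X h he
      calc IncClose m a b d i j ≤ m i u + w + m v j := h
        _ ≤ (m i k + m k u) + w + m v j := by gcongr; exact htri i u k
        _ = X := by rw [← he]; abel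
    have mainR : ∀ (u v : Fin (2 * n)) (w X : WithTop ℚ),
        IncClose m a b d i j ≤ m i u + w + m v j →
        m i u + w + m v k + m k j = X → IncClose m a b d i j ≤ X := by
      intro u v w X h he
      calc IncClose m a b d i j ≤ m i u + w + m v j := h
        _ ≤ m i u + w + (m v k + m k j) := by gcongr; exact htri v j k
        _ = X := by rw [← he]; abel
    -- weight composition facts
    rw [incClose_def m a b d i k, incClose_def m a b d k j]
    simp only [← min_add_add_right, ← min_add_add_left, le_min_iff]
    repeat' apply And.intro
    -- q = 0 (second factor is m k j)
    · exact le_trans T0 (htri i j k)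
    · exact mainR a b D _ T1 rfl
    · exact mainR (bar b) (bar a) D _ T2 rfl
    · exact mainR (bar b) b (D + m (bar a) a + D) _ T3 (by abel)
    · exact mainR a (bar a) (D + m b (bar b) + D) _ T4 (by abel)
    -- q = 1 : second factor is m k a + D + m b j  (pair P1)
    · exact mainL a b D _ T1 rfl
    · exact main a b a b D D D _ (drop1 D (D + m b a) _ C1 (by abel)) T1 (by abel)
    · exact main (bar b) (bar a) a b D D (D + m (bar a) a + D) _ (le_of_eq (by abel)) T3 (by abel)
    · exact main (bar b) b a b (D + m (bar a) a + D) D (D + m (bar a) a + D) _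
        (drop1 _ (D + m b a) _ C1 (by abel)) T3 (by abel)
    · exact main a (bar a) a b (D + m b (bar b) + D) D D _
        (drop1 D (m b (bar b) + D + m (bar a) a + D) _ C3 (by abel)) T1 (by abel)
    -- q = 2 : second factor is m k b̄ + D + m ā j (pair P2)
    · exact mainL (bar b) (bar a) D _ T2 rfl
    · exact main a b (bar b) (bar a) D D (D + m b (bar b) + D) _ (le_of_eq (by abel)) T4 (by abel)
    · exact main (bar b) (bar a) (bar b) (bar a) D D D _
        (drop1 D (D + m (bar a) (bar b)) _ C1' (by abel)) T2 (by abel)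
    · exact main (bar b) b (bar b) (bar a) (D + m (bar a) a + D) D D _
        (drop1 D (m b (bar b) + D + m (bar a) a + D) _ C3 (by abel)) T2 (by abel)
    · exact main a (bar a) (bar b) (bar a) (D + m b (bar b) + D) D (D + m b (bar b) + D) _
        (drop1 _ (D + m (bar a) (bar b)) _ C1' (by abel)) T4 (by abel)
    -- q = 3 : second factor is m k b̄ + (D + m ā a + D) + m b j (pair P3)
    · exact mainL (bar b) b (D + m (bar a) a + D) _ T3 (by abel)
    · exact main a b (bar b) b D (D + m (bar a) a + D) D _
        (drop1 D (m b (bar b) + D + m (bar a) a + D) _ C3 (by abel)) T1 (by abel)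
    · exact main (bar b) (bar a) (bar b) b D (D + m (bar a) a + D) (D + m (bar a) a + D) _
        (drop1 _ (D + m (bar a) (bar b)) _ C1' (by abel)) T3 (by abel)
    · exact main (bar b) b (bar b) b (D + m (bar a) a + D) (D + m (bar a) a + D)
        (D + m (bar a) a + D) _
        (drop1 _ (m b (bar b) + D + m (bar a) a + D) _ C3 (by abel)) T3 (by abel)
    · exact main a (bar a) (bar b) b (D + m b (bar b) + D) (D + m (bar a) a + D) D _
        (drop2 D (D + m (bar a) (bar b)) (m b (bar b) + D + m (bar a) a + D) _
          C1' C3 (by abel)) T1 (by abel)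
    -- q = 4 : second factor is m k a + (D + m b b̄ + D) + m ā j (pair P4)
    · exact mainL a (bar a) (D + m b (bar b) + D) _ T4 (by abel)
    · exact main a b a (bar a) D (D + m b (bar b) + D) (D + m b (bar b) + D) _
        (drop1 _ (D + m b a) _ C1 (by abel)) T4 (by abel)
    · exact main (bar b) (bar a) a (bar a) D (D + m b (bar b) + D) D _
        (drop1 D (m b (bar b) + D + m (bar a) a + D) _ C3 (by abel)) T2 (by abel)
    · exact main (bar b) b a (bar a) (D + m (bar a) a + D) (D + m b (bar b) + D) D _
        (drop2 D (D + m b a) (m b (bar b) + D + m (bar a) a + D) _ C1 C3 (by abel)) T2 (by abel)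
    · exact main a (bar a) a (bar a) (D + m b (bar b) + D) (D + m b (bar b) + D)
        (D + m b (bar b) + D) _
        (drop1 _ (m b (bar b) + D + m (bar a) a + D) _ C3 (by abel)) T4 (by abel)

theorem incClose_coherent (hcoh : Coherent m) : Coherent (IncClose m a b d) := by
  intro i j
  rw [incClose_def, incClose_def]
  have e1 : m (bar j) (bar i) = m i j := (hcoh i j).symm
  have e2 : m (bar j) a = m (bar a) j := by rw [hcoh (bar a) j, bar_bar]
  have e3 : m b (bar i) = m i (bar b) := by rw [hcoh i (bar b), bar_bar]
  have e4 : m (bar j) (bar b) = m b j := (hcoh b j).symm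
  have e5 : m (bar a) (bar i) = m i a := (hcoh i a).symm
  rw [e1, e2, e3, e4, e5]
  rw [show m (bar a) j + (d : WithTop ℚ) + m i (bar b)
      = m i (bar b) + (d : WithTop ℚ) + m (bar a) j by abel]
  rw [show m b j + (d : WithTop ℚ) + m i a = m i a + (d : WithTop ℚ) + m b j by abel]
  rw [show m b j + (d : WithTop ℚ) + m (bar a) a + (d : WithTop ℚ) + m i (bar b)
      = m i (bar b) + (d : WithTop ℚ) + m (bar a) a + (d : WithTop ℚ) + m b j by abel]
  rw [show m (bar a) j + (d : WithTop ℚ) + m b (bar b) + (d : WithTop ℚ) + m i a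
      = m i a + (d : WithTop ℚ) + m b (bar b) + (d : WithTop ℚ) + m (bar a) j by abel]
  rw [min_left_comm (m i a + (d : WithTop ℚ) + m b j)]

end AuxInc

/-- Lemma: incremental closure followed by strengthening is a fixpoint of
incremental closure (or everything is inconsistent). -/
theorem incClose_strengthen_incClose {n : ℕ} (m : DBM n) (hcl : Closed m)
    (hcoh : Coherent m) (a b : Fin (2 * n)) (d : ℚ) (mA mB mC : DBM n)
    (hmA : mA = IncClose m a b d) (hmB : mB = Strengthen mA)
    (hmC : mC = IncClose mB a b d) :
    (Consistent mA ∧ mC = mB) ∨ ¬ Consistent mC := by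
  subst hmA; subst hmB; subst hmC
  by_cases hA : Consistent (IncClose m a b d)
  · left
    refine ⟨hA, ?_⟩
    set A := IncClose m a b d with hAdef
    have hAcl : Closed A := incClose_closed m a b d hcl hcoh hA
    have hAcoh : Coherent A := incClose_coherent m a b d hcoh
    set B := Strengthen A with hBdef
    have hBcl : Closed B := strengthen_closed A hAcl hAcoh
    have htriB := hBcl.2
    have hab : A a b ≤ (d : WithTop ℚ) := by
      have h := incClose_le1 m a b d a b
      rwa [hcl.1 a, hcl.1 b, zero_add, add_zero] at h
    have hba' : A (bar b) (bar a) ≤ (d : WithTop ℚ) := by rw [← hAcoh a b]; exact hab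
    have haa' : A a (bar a) ≤ (d : WithTop ℚ) + (d : WithTop ℚ) + A b (bar b) := by
      calc A a (bar a) ≤ A a b + A b (bar a) := hAcl.2 a (bar a) b
        _ ≤ A a b + (A b (bar b) + A (bar b) (bar a)) := by
            gcongr; exact hAcl.2 b (bar a) (bar b)
        _ ≤ (d : WithTop ℚ) + (A b (bar b) + (d : WithTop ℚ)) := by
            gcongr
        _ = (d : WithTop ℚ) + (d : WithTop ℚ) + A b (bar b) := by abel
    have hbb : A (bar b) b ≤ (d : WithTop ℚ) + (d : WithTop ℚ) + A (bar a) a := by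
      calc A (bar b) b ≤ A (bar b) (bar a) + A (bar a) b := hAcl.2 (bar b) b (bar a)
        _ ≤ A (bar b) (bar a) + (A (bar a) a + A a b) := by
            gcongr; exact hAcl.2 (bar a) b a
        _ ≤ (d : WithTop ℚ) + (A (bar a) a + (d : WithTop ℚ)) := by
            gcongr
        _ = (d : WithTop ℚ) + (d : WithTop ℚ) + A (bar a) a := by abel
    have E1 : ∀ j, B a j ≤ (d : WithTop ℚ) + B b j := by
      intro j
      rw [hBdef, strengthen_def A b j, ← min_add_add_left]
      refine le_min ?_ ?_
      · calc B a j ≤ A a j := strengthen_le A a j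
          _ ≤ A a b + A b j := hAcl.2 a j b
          _ ≤ (d : WithTop ℚ) + A b j := by gcongr
      · calc B a j ≤ halve (A a (bar a) + A (bar j) j) := strengthen_le' A a j
          _ ≤ halve ((d : WithTop ℚ) + (d : WithTop ℚ) + (A b (bar b) + A (bar j) j)) := by
              apply halve_mono
              calc A a (bar a) + A (bar j) j
                  ≤ ((d : WithTop ℚ) + (d : WithTop ℚ) + A b (bar b)) + A (bar j) j := by
                    gcongr
                _ = (d : WithTop ℚ) + (d : WithTop ℚ) + (A b (bar b) + A (bar j) j) := by abel
          _ = (d : WithTop ℚ) + halve (A b (bar b) + A (bar j) j) := halve_add_self _ _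
    have E2 : ∀ j, B (bar b) j ≤ (d : WithTop ℚ) + B (bar a) j := by
      intro j
      rw [hBdef, strengthen_def A (bar a) j, ← min_add_add_left]
      refine le_min ?_ ?_
      · calc B (bar b) j ≤ A (bar b) j := strengthen_le A (bar b) j
          _ ≤ A (bar b) (bar a) + A (bar a) j := hAcl.2 (bar b) j (bar a)
          _ ≤ (d : WithTop ℚ) + A (bar a) j := by gcongr
      · calc B (bar b) j ≤ halve (A (bar b) (bar (bar b)) + A (bar j) j) :=
              strengthen_le' A (bar b) j
          _ = halve (A (bar b) b + A (bar j) j) := by rw [bar_bar]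
          _ ≤ halve ((d : WithTop ℚ) + (d : WithTop ℚ) + (A (bar a) a + A (bar j) j)) := by
              apply halve_mono
              calc A (bar b) b + A (bar j) j
                  ≤ ((d : WithTop ℚ) + (d : WithTop ℚ) + A (bar a) a) + A (bar j) j := by
                    gcongr
                _ = (d : WithTop ℚ) + (d : WithTop ℚ) + (A (bar a) a + A (bar j) j) := by abel
          _ = (d : WithTop ℚ) + halve (A (bar a) a + A (bar j) j) := halve_add_self _ _
          _ = (d : WithTop ℚ) + halve (A (bar a) (bar (bar a)) + A (bar j) j) := by
              rw [bar_bar]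
    funext i j
    refine le_antisymm (incClose_le B a b d i j) ?_
    rw [incClose_def B a b d i j]
    refine le_min le_rfl (le_min ?_ (le_min ?_ (le_min ?_ ?_)))
    · calc B i j ≤ B i a + B a j := htriB i j a
        _ ≤ B i a + ((d : WithTop ℚ) + B b j) := by gcongr; exact E1 j
        _ = B i a + (d : WithTop ℚ) + B b j := (add_assoc _ _ _).symm
    · calc B i j ≤ B i (bar b) + B (bar b) j := htriB i j (bar b)
        _ ≤ B i (bar b) + ((d : WithTop ℚ) + B (bar a) j) := by gcongr; exact E2 j
        _ = B i (bar b) + (d : WithTop ℚ) + B (bar a) j := (add_assoc _ _ _).symm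
    · calc B i j ≤ B i (bar b) + B (bar b) j := htriB i j (bar b)
        _ ≤ B i (bar b) + ((d : WithTop ℚ) + B (bar a) j) := by gcongr; exact E2 j
        _ ≤ B i (bar b) + ((d : WithTop ℚ) + (B (bar a) a + B a j)) := by
            gcongr; exact htriB (bar a) j a
        _ ≤ B i (bar b) + ((d : WithTop ℚ) + (B (bar a) a + ((d : WithTop ℚ) + B b j))) := by
            gcongr; exact E1 j
        _ = B i (bar b) + (d : WithTop ℚ) + B (bar a) a + (d : WithTop ℚ) + B b j := by abel
    · calc B i j ≤ B i a + B a j := htriB i j a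
        _ ≤ B i a + ((d : WithTop ℚ) + B b j) := by gcongr; exact E1 j
        _ ≤ B i a + ((d : WithTop ℚ) + (B b (bar b) + B (bar b) j)) := by
            gcongr; exact htriB b j (bar b)
        _ ≤ B i a + ((d : WithTop ℚ) + (B b (bar b) + ((d : WithTop ℚ) + B (bar a) j))) := by
            gcongr; exact E2 j
        _ = B i a + (d : WithTop ℚ) + B b (bar b) + (d : WithTop ℚ) + B (bar a) j := by abel
  · right
    intro hC
    apply hA
    intro i
    calc (0 : WithTop ℚ) ≤ IncClose (Strengthen (IncClose m a b d)) a b d i i := hC i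
      _ ≤ Strengthen (IncClose m a b d) i i := incClose_le _ _ _ _ _ _
      _ ≤ IncClose m a b d i i := strengthen_le _ _ _

end Octagon
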